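/- For the general sequential MRPE methodology P(ρ,k), under the limit operations m₀ → ∞, m = m₀k + 1 → ∞, c = c(m) = O(m^{-2r}), n* = O(m^r) for a fixed constant r > 1, and limsup m/n* < ρ, for any fixed 0 < ε < 1 and any fixed γ ≥ 2 for which E|S_m − σ|^γ = O(m^{-γ/2}), the left-tail probability of the final sample size satisfies P(N_{P(ρ,k)} ≤ ε n*) = O(n*^{−γ/(2r)}). -/

import Mathlib

open MeasureTheory ProbabilityTheory Filter Topology Asymptotics Real Finset
open scoped NNReal

/-!
On the event `N ≤ ε n*`, either the stopping rule fired at some `q ∈ [m, ρ ε n*]`, which forces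
`S_q ≤ ε σ`, or it never fired, which forces `S_Q > 2 σ` at `Q = m + k ⌈2 ρ n*⌉`. Writing
`∑ (X_i - μ)² = ∑ (X_i - X̄_q)² + q (X̄_q - μ)²`, the first event implies a small chi-square sum
`∑ (X_i - μ)²` or a large `|∑ (X_i - μ)|`, and the second a large chi-square sum. Chernoff bounds
with the exact Gaussian moment generating functions make each of these exponentially small in
`q ≥ m`, so `P(N ≤ ε n*) = O(λ^m)` for some `λ < 1`, and `λ^m = O(m^(-γ/2)) = O(n*^(-γ/(2r)))`
because `n* = O(m^r)`.
-/

lemma sqrt_mul_exp_half_one_sub_lt_one {θ : ℝ} (hθ : 0 < θ) (hθ1 : θ ≠ 1) :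
    √θ * exp ((1 - θ) / 2) < 1 := by
  have hsq : (√θ * exp ((1 - θ) / 2)) ^ 2 = θ / exp (θ - 1) := by
    rw [mul_pow, sq_sqrt hθ.le, ← exp_nat_mul, div_eq_mul_inv θ, ← exp_neg]
    congr 2
    push_cast
    ring
  have hθe : θ < exp (θ - 1) := by
    simpa using add_one_lt_exp (sub_ne_zero.mpr hθ1)
  rw [← pow_lt_one_iff_of_nonneg (by positivity) two_ne_zero, hsq]
  exact (div_lt_one (exp_pos _)).mpr hθe

section GaussianSquare

variable {v : ℝ≥0} {t : ℝ}

lemma integrable_gaussianReal_iff {μ : ℝ} (hv : v ≠ 0) {f : ℝ → ℝ} :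
    Integrable f (gaussianReal μ v) ↔ Integrable (fun x ↦ gaussianPDFReal μ v x * f x) := by
  rw [gaussianReal_of_var_ne_zero _ hv, gaussianPDF_def,
    integrable_withDensity_iff_integrable_smul' (by fun_prop)
      (ae_of_all _ fun _ ↦ ENNReal.ofReal_lt_top)]
  simp only [ENNReal.toReal_ofReal (gaussianPDFReal_nonneg _ _ _), smul_eq_mul]

lemma gaussianPDFReal_zero_mul_exp_mul_sq (x : ℝ) :
    gaussianPDFReal 0 v x * exp (t * x ^ 2) =
      (√(2 * π * v))⁻¹ * exp (-((2 * (v : ℝ))⁻¹ - t) * x ^ 2) := by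
  rw [gaussianPDFReal, mul_assoc, ← exp_add]
  congr 2
  ring

lemma integrable_exp_mul_sq_gaussianReal (hv : v ≠ 0) (ht : 2 * t * v < 1) :
    Integrable (fun x ↦ exp (t * x ^ 2)) (gaussianReal 0 v) := by
  rw [integrable_gaussianReal_iff hv]
  simp only [gaussianPDFReal_zero_mul_exp_mul_sq]
  refine (integrable_exp_neg_mul_sq ?_).const_mul _
  rw [sub_pos, ← one_div, lt_div_iff₀ (by positivity)]
  linarith

lemma integral_exp_mul_sq_gaussianReal (hv : v ≠ 0) :
    ∫ x, exp (t * x ^ 2) ∂gaussianReal 0 v = (√(1 - 2 * t * v))⁻¹ := by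
  rw [integral_gaussianReal_eq_integral_smul hv]
  simp only [smul_eq_mul, gaussianPDFReal_zero_mul_exp_mul_sq]
  rw [integral_const_mul, integral_gaussian, ← sqrt_inv, ← sqrt_mul (by positivity), ← sqrt_inv]
  congr 1
  field_simp

end GaussianSquare

section Chernoff

variable {Ω : Type*} [MeasurableSpace Ω] {P : Measure Ω} [IsProbabilityMeasure P]
  {Y : ℕ → Ω → ℝ} {t M : ℝ}

lemma measureReal_sum_range_le_le_pow (hY : iIndepFun Y P) (hYm : ∀ i, Measurable (Y i))
    (ht : t ≤ 0) (hint : ∀ i, Integrable (fun ω ↦ exp (t * Y i ω)) P)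
    (hmgf : ∀ i, mgf (Y i) P t = M) (q : ℕ) (b : ℝ) :
    P.real {ω | ∑ i ∈ range q, Y i ω ≤ q * b} ≤ (exp (-t * b) * M) ^ q := by
  have h := measure_le_le_exp_mul_mgf (X := ∑ i ∈ range q, Y i) (q * b) ht
    (hY.integrable_exp_mul_sum hYm fun i _ ↦ hint i)
  simp only [Finset.sum_apply] at h
  rw [hY.mgf_sum hYm, Finset.prod_congr rfl fun i _ ↦ hmgf i, prod_const, card_range] at h
  rwa [mul_pow, ← exp_nat_mul, mul_left_comm]

lemma measureReal_le_sum_range_le_pow (hY : iIndepFun Y P) (hYm : ∀ i, Measurable (Y i))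
    (ht : 0 ≤ t) (hint : ∀ i, Integrable (fun ω ↦ exp (t * Y i ω)) P)
    (hmgf : ∀ i, mgf (Y i) P t = M) (q : ℕ) (b : ℝ) :
    P.real {ω | q * b ≤ ∑ i ∈ range q, Y i ω} ≤ (exp (-t * b) * M) ^ q := by
  have h := measure_ge_le_exp_mul_mgf (X := ∑ i ∈ range q, Y i) (q * b) ht
    (hY.integrable_exp_mul_sum hYm fun i _ ↦ hint i)
  simp only [Finset.sum_apply] at h
  rw [hY.mgf_sum hYm, Finset.prod_congr rfl fun i _ ↦ hmgf i, prod_const, card_range] at h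
  rwa [mul_pow, ← exp_nat_mul, mul_left_comm]

end Chernoff

section GaussianTails

variable {Ω : Type*} [MeasurableSpace Ω] {P : Measure Ω} {v : ℝ≥0} {t : ℝ}

lemma integrable_exp_mul_sq_of_map_eq_gaussianReal {W : Ω → ℝ} (hW : Measurable W)
    (hlaw : P.map W = gaussianReal 0 v) (hv : v ≠ 0) (ht : 2 * t * v < 1) :
    Integrable (fun ω ↦ exp (t * W ω ^ 2)) P := by
  have h := integrable_exp_mul_sq_gaussianReal hv ht
  rw [← hlaw] at h
  exact (integrable_map_measure (by fun_prop) hW.aemeasurable).mp h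

lemma mgf_sq_of_map_eq_gaussianReal {W : Ω → ℝ} (hW : Measurable W)
    (hlaw : P.map W = gaussianReal 0 v) (hv : v ≠ 0) :
    mgf (fun ω ↦ W ω ^ 2) P t = (√(1 - 2 * t * v))⁻¹ := by
  rw [mgf, ← integral_exp_mul_sq_gaussianReal hv, ← hlaw,
    integral_map hW.aemeasurable (by fun_prop)]

/-- Cramér's rate for the chi-square law, attained at `t = (1 - θ⁻¹) / (2 v)`. -/
lemma exp_mul_inv_sqrt_eq_sqrt_mul_exp {v θ : ℝ} (hv : v ≠ 0) (hθ : 0 < θ) :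
    exp (-((1 - θ⁻¹) / (2 * v)) * (θ * v)) * (√(1 - 2 * ((1 - θ⁻¹) / (2 * v)) * v))⁻¹
      = √θ * exp ((1 - θ) / 2) := by
  rw [mul_comm]
  congr 1
  · rw [show 1 - 2 * ((1 - θ⁻¹) / (2 * v)) * v = θ⁻¹ by field_simp; ring, sqrt_inv, inv_inv]
  · congr 1
    field_simp
    ring

variable [IsProbabilityMeasure P] {W : ℕ → Ω → ℝ}

lemma measureReal_sum_sq_le_le_pow (hW : iIndepFun W P) (hWm : ∀ i, Measurable (W i))
    (hWlaw : ∀ i, P.map (W i) = gaussianReal 0 v) (hv : v ≠ 0) {θ : ℝ} (hθ0 : 0 < θ)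
    (hθ1 : θ < 1) (q : ℕ) :
    P.real {ω | ∑ i ∈ range q, W i ω ^ 2 ≤ q * (θ * v)} ≤ (√θ * exp ((1 - θ) / 2)) ^ q := by
  have hv' : (v : ℝ) ≠ 0 := by positivity
  rw [← exp_mul_inv_sqrt_eq_sqrt_mul_exp hv' hθ0]
  refine measureReal_sum_range_le_le_pow (Y := fun i ω ↦ W i ω ^ 2)
    (hW.comp (fun _ x ↦ x ^ 2) fun _ ↦ by fun_prop) (fun i ↦ (hWm i).pow_const 2) ?_
    (fun i ↦ integrable_exp_mul_sq_of_map_eq_gaussianReal (hWm i) (hWlaw i) hv ?_)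
    (fun i ↦ mgf_sq_of_map_eq_gaussianReal (hWm i) (hWlaw i) hv) q _
  · have : 1 ≤ θ⁻¹ := one_le_inv₀ hθ0 |>.mpr hθ1.le
    exact div_nonpos_of_nonpos_of_nonneg (by linarith) (by positivity)
  · field_simp
    linarith [inv_pos.mpr hθ0]

lemma measureReal_le_sum_sq_le_pow (hW : iIndepFun W P) (hWm : ∀ i, Measurable (W i))
    (hWlaw : ∀ i, P.map (W i) = gaussianReal 0 v) (hv : v ≠ 0) {θ : ℝ} (hθ1 : 1 < θ) (q : ℕ) :
    P.real {ω | q * (θ * v) ≤ ∑ i ∈ range q, W i ω ^ 2} ≤ (√θ * exp ((1 - θ) / 2)) ^ q := by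
  have hv' : (v : ℝ) ≠ 0 := by positivity
  have hθ0 : 0 < θ := by linarith
  rw [← exp_mul_inv_sqrt_eq_sqrt_mul_exp hv' hθ0]
  refine measureReal_le_sum_range_le_pow (Y := fun i ω ↦ W i ω ^ 2)
    (hW.comp (fun _ x ↦ x ^ 2) fun _ ↦ by fun_prop) (fun i ↦ (hWm i).pow_const 2) ?_
    (fun i ↦ integrable_exp_mul_sq_of_map_eq_gaussianReal (hWm i) (hWlaw i) hv ?_)
    (fun i ↦ mgf_sq_of_map_eq_gaussianReal (hWm i) (hWlaw i) hv) q _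
  · have : θ⁻¹ ≤ 1 := inv_le_one_of_one_le₀ hθ1.le
    exact div_nonneg (by linarith) (by positivity)
  · field_simp
    linarith [inv_pos.mpr hθ0]

lemma measureReal_le_sum_le_pow (hW : iIndepFun W P) (hWm : ∀ i, Measurable (W i))
    (hWlaw : ∀ i, P.map (W i) = gaussianReal 0 v) (hv : v ≠ 0) {a : ℝ} (ha : 0 ≤ a) (q : ℕ) :
    P.real {ω | q * a ≤ ∑ i ∈ range q, W i ω} ≤ exp (-(a ^ 2 / (2 * v))) ^ q := by
  have hv' : (0 : ℝ) < v := by positivity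
  have h := measureReal_le_sum_range_le_pow hW hWm (div_nonneg ha hv'.le)
    (fun i ↦ ?_) (fun i ↦ mgf_gaussianReal (hWlaw i) _) q a
  · rwa [← exp_add, show -(a / v) * a + (0 * (a / v) + v * (a / v) ^ 2 / 2)
      = -(a ^ 2 / (2 * v)) by field_simp; ring] at h
  · have h := integrable_exp_mul_gaussianReal (μ := 0) (v := v) (a / v)
    rw [← hWlaw i] at h
    exact (integrable_map_measure (by fun_prop) (hWm i).aemeasurable).mp h

end GaussianTails

section SampleMoments

lemma sum_sq_sub_eq_sum_sq_sub_mean_add (x : ℕ → ℝ) {q : ℕ} (hq : q ≠ 0) (c : ℝ) :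
    ∑ i ∈ range q, (x i - c) ^ 2 = ∑ i ∈ range q, (x i - (q : ℝ)⁻¹ * ∑ j ∈ range q, x j) ^ 2
      + q * ((q : ℝ)⁻¹ * ∑ j ∈ range q, x j - c) ^ 2 := by
  set xbar := (q : ℝ)⁻¹ * ∑ j ∈ range q, x j
  have hdev : ∑ i ∈ range q, (x i - xbar) = 0 := by
    rw [sum_sub_distrib, sum_const, card_range, nsmul_eq_mul, mul_inv_cancel_left₀ (by positivity),
      sub_self]
  calc ∑ i ∈ range q, (x i - c) ^ 2
      = ∑ i ∈ range q, ((x i - xbar) ^ 2 + 2 * (xbar - c) * (x i - xbar) + (xbar - c) ^ 2) :=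
        sum_congr rfl fun i _ ↦ by ring
    _ = _ := by
        rw [sum_add_distrib, sum_add_distrib, ← mul_sum, hdev, sum_const, card_range,
          nsmul_eq_mul]
        ring

lemma sum_sq_sub_le_or_le_abs_sum_sub (x : ℕ → ℝ) {q : ℕ} (hq : q ≠ 0) (c : ℝ) {e a : ℝ}
    (h : ∑ i ∈ range q, (x i - (q : ℝ)⁻¹ * ∑ j ∈ range q, x j) ^ 2 ≤ q * e) :
    ∑ i ∈ range q, (x i - c) ^ 2 ≤ q * (e + a ^ 2) ∨ q * a ≤ |∑ i ∈ range q, (x i - c)| := by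
  have hq' : (0 : ℝ) < q := by positivity
  set d := (q : ℝ)⁻¹ * ∑ j ∈ range q, x j - c
  rcases lt_or_ge |d| a with hd | hd
  · left
    have hd2 : d ^ 2 ≤ a ^ 2 := by
      rw [← sq_abs]; exact pow_le_pow_left₀ (abs_nonneg d) hd.le 2
    rw [sum_sq_sub_eq_sum_sq_sub_mean_add x hq c]
    nlinarith
  · right
    have hsum : ∑ i ∈ range q, (x i - c) = q * d := by
      rw [sum_sub_distrib, sum_const, card_range, nsmul_eq_mul, mul_sub,
        mul_inv_cancel_left₀ hq'.ne']
    rw [hsum, abs_mul, Nat.abs_cast]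
    exact mul_le_mul_of_nonneg_left hd hq'.le

noncomputable def sampleStdDev (x : ℕ → ℝ) (n : ℕ) : ℝ :=
  √(((n : ℝ) - 1)⁻¹ * ∑ i ∈ range n, (x i - (n : ℝ)⁻¹ * ∑ j ∈ range n, x j) ^ 2)

lemma sum_sq_sub_mean_le_of_sampleStdDev_le {x : ℕ → ℝ} {n : ℕ} (hn : 2 ≤ n) {a : ℝ}
    (h : sampleStdDev x n ≤ a) :
    ∑ i ∈ range n, (x i - (n : ℝ)⁻¹ * ∑ j ∈ range n, x j) ^ 2 ≤ n * a ^ 2 := by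
  have hn' : (2 : ℝ) ≤ n := by exact_mod_cast hn
  obtain ⟨ha, h⟩ := sqrt_le_iff.mp h
  rw [inv_mul_le_iff₀ (by linarith)] at h
  nlinarith

lemma le_sum_sq_sub_of_lt_sampleStdDev {x : ℕ → ℝ} {n : ℕ} (hn : 4 ≤ n) (c : ℝ) {σ : ℝ}
    (hσ : 0 ≤ σ) (h : 2 * σ < sampleStdDev x n) :
    n * (3 * σ ^ 2) ≤ ∑ i ∈ range n, (x i - c) ^ 2 := by
  have hn' : (4 : ℝ) ≤ n := by exact_mod_cast hn
  have h := (lt_sqrt (by positivity)).mp h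
  rw [lt_inv_mul_iff₀ (by linarith)] at h
  rw [sum_sq_sub_eq_sum_sq_sub_mean_add x (by omega) c]
  nlinarith [sq_nonneg ((n : ℝ)⁻¹ * ∑ j ∈ range n, x j - c), sq_nonneg σ]

end SampleMoments

section SampleStdDevTails

variable {Ω : Type*} [MeasurableSpace Ω] {P : Measure Ω} {X : ℕ → Ω → ℝ} {μ σ : ℝ}

lemma map_sub_const_eq_gaussianReal {W : Ω → ℝ} (hW : Measurable W) {v : ℝ≥0}
    (hlaw : P.map W = gaussianReal μ v) : P.map (fun ω ↦ W ω - μ) = gaussianReal 0 v := by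
  rw [show (fun ω ↦ W ω - μ) = (· - μ) ∘ W from rfl, ← Measure.map_map (measurable_sub_const μ) hW,
    hlaw, gaussianReal_map_sub_const, sub_self]

lemma map_const_sub_eq_gaussianReal {W : Ω → ℝ} (hW : Measurable W) {v : ℝ≥0}
    (hlaw : P.map W = gaussianReal μ v) : P.map (fun ω ↦ μ - W ω) = gaussianReal 0 v := by
  rw [show (fun ω ↦ μ - W ω) = (μ - ·) ∘ W from rfl, ← Measure.map_map (measurable_const_sub μ) hW,
    hlaw, gaussianReal_map_const_sub, sub_self]

variable [IsProbabilityMeasure P]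

lemma measureReal_le_abs_sum_le (hX : iIndepFun X P) (hXm : ∀ i, Measurable (X i))
    (hXlaw : ∀ i, P.map (X i) = gaussianReal μ ⟨σ ^ 2, sq_nonneg σ⟩) (hσ : σ ≠ 0) {a : ℝ}
    (ha : 0 ≤ a) (q : ℕ) :
    P.real {ω | q * a ≤ |∑ i ∈ range q, (X i ω - μ)|} ≤ 2 * exp (-(a ^ 2 / (2 * σ ^ 2))) ^ q := by
  have hv : (⟨σ ^ 2, sq_nonneg σ⟩ : ℝ≥0) ≠ 0 := NNReal.coe_ne_zero.mp (pow_ne_zero 2 hσ)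
  have hupper := measureReal_le_sum_le_pow (W := fun i ω ↦ X i ω - μ)
    (hX.comp _ fun _ ↦ measurable_sub_const μ) (fun i ↦ (hXm i).sub_const μ)
    (fun i ↦ map_sub_const_eq_gaussianReal (hXm i) (hXlaw i)) hv ha q
  have hlower := measureReal_le_sum_le_pow (W := fun i ω ↦ μ - X i ω)
    (hX.comp _ fun _ ↦ measurable_const_sub μ) (fun i ↦ (hXm i).const_sub μ)
    (fun i ↦ map_const_sub_eq_gaussianReal (hXm i) (hXlaw i)) hv ha q
  have hsubset : {ω | q * a ≤ |∑ i ∈ range q, (X i ω - μ)|} ⊆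
      {ω | q * a ≤ ∑ i ∈ range q, (X i ω - μ)} ∪ {ω | q * a ≤ ∑ i ∈ range q, (μ - X i ω)} := by
    intro ω hω
    simp only [Set.mem_ofPred_eq, Set.mem_union, ← neg_sub (X _ ω), sum_neg_distrib] at hω ⊢
    exact le_abs.mp hω
  calc _ ≤ _ := measureReal_mono hsubset
    _ ≤ _ := measureReal_union_le _ _
    _ ≤ _ := (add_le_add hupper hlower).trans_eq (two_mul _).symm

theorem exists_measureReal_sampleStdDev_le_le (hX : iIndepFun X P) (hXm : ∀ i, Measurable (X i))
    (hXlaw : ∀ i, P.map (X i) = gaussianReal μ ⟨σ ^ 2, sq_nonneg σ⟩) (hσ : 0 < σ) {ε : ℝ}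
    (hε0 : 0 < ε) (hε1 : ε < 1) :
    ∃ l, 0 < l ∧ l < 1 ∧ ∀ q, 2 ≤ q → P.real {ω | sampleStdDev (X · ω) q ≤ ε * σ} ≤ 3 * l ^ q := by
  have hv : (⟨σ ^ 2, sq_nonneg σ⟩ : ℝ≥0) ≠ 0 := NNReal.coe_ne_zero.mp (pow_ne_zero 2 hσ.ne')
  have hε2 : ε ^ 2 < 1 := by nlinarith
  set θ := (1 + ε ^ 2) / 2
  set a := σ * √((1 - ε ^ 2) / 2)
  have ha : a ^ 2 = σ ^ 2 * ((1 - ε ^ 2) / 2) := by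
    rw [mul_pow, sq_sqrt (by linarith)]
  set l₁ := √θ * exp ((1 - θ) / 2)
  set l₂ := exp (-(a ^ 2 / (2 * σ ^ 2)))
  have hl₁ : l₁ < 1 := sqrt_mul_exp_half_one_sub_lt_one (by positivity) (by simp [θ]; linarith)
  have hl₂ : l₂ < 1 := exp_lt_one_iff.mpr <| neg_lt_zero.mpr <| by
    rw [ha]; exact div_pos (mul_pos (by positivity) (by linarith)) (by positivity)
  refine ⟨max l₁ l₂, by positivity, max_lt hl₁ hl₂, fun q hq ↦ ?_⟩
  have hsubset : {ω | sampleStdDev (X · ω) q ≤ ε * σ} ⊆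
      {ω | ∑ i ∈ range q, (X i ω - μ) ^ 2 ≤ q * (θ * σ ^ 2)} ∪
        {ω | q * a ≤ |∑ i ∈ range q, (X i ω - μ)|} := by
    intro ω hω
    have h := sum_sq_sub_mean_le_of_sampleStdDev_le hq hω
    have hθa : (ε * σ) ^ 2 + a ^ 2 = θ * σ ^ 2 := by rw [ha]; ring
    rw [← hθa]
    exact sum_sq_sub_le_or_le_abs_sum_sub _ (by omega) μ h
  calc _ ≤ _ := measureReal_mono hsubset
    _ ≤ _ := measureReal_union_le _ _
    _ ≤ l₁ ^ q + 2 * l₂ ^ q := add_le_add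
        (measureReal_sum_sq_le_le_pow (W := fun i ω ↦ X i ω - μ)
          (hX.comp _ fun _ ↦ measurable_sub_const μ) (fun i ↦ (hXm i).sub_const μ)
          (fun i ↦ map_sub_const_eq_gaussianReal (hXm i) (hXlaw i)) hv (by positivity)
          (by simp [θ]; linarith) q)
        (measureReal_le_abs_sum_le hX hXm hXlaw hσ.ne' (by positivity) q)
    _ ≤ 3 * max l₁ l₂ ^ q := by
        have h₁ := pow_le_pow_left₀ (by positivity) (le_max_left l₁ l₂) q
        have h₂ := pow_le_pow_left₀ (by positivity) (le_max_right l₁ l₂) q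
        linarith

theorem exists_measureReal_lt_sampleStdDev_le (hX : iIndepFun X P) (hXm : ∀ i, Measurable (X i))
    (hXlaw : ∀ i, P.map (X i) = gaussianReal μ ⟨σ ^ 2, sq_nonneg σ⟩) (hσ : 0 < σ) :
    ∃ l, 0 < l ∧ l < 1 ∧ ∀ q, 4 ≤ q → P.real {ω | 2 * σ < sampleStdDev (X · ω) q} ≤ l ^ q := by
  have hv : (⟨σ ^ 2, sq_nonneg σ⟩ : ℝ≥0) ≠ 0 := NNReal.coe_ne_zero.mp (pow_ne_zero 2 hσ.ne')
  refine ⟨√3 * exp ((1 - 3) / 2), by positivity,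
    sqrt_mul_exp_half_one_sub_lt_one (by norm_num) (by norm_num), fun q hq ↦ ?_⟩
  refine (measureReal_mono fun ω hω ↦ ?_).trans (measureReal_le_sum_sq_le_pow
    (W := fun i ω ↦ X i ω - μ) (hX.comp _ fun _ ↦ measurable_sub_const μ)
    (fun i ↦ (hXm i).sub_const μ) (fun i ↦ map_sub_const_eq_gaussianReal (hXm i) (hXlaw i)) hv
    (by norm_num : (1 : ℝ) < 3) q)
  exact le_sum_sq_sub_of_lt_sampleStdDev hq μ hσ.le hω

theorem exists_measureReal_sampleStdDev_tails_le (hX : iIndepFun X P)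
    (hXm : ∀ i, Measurable (X i))
    (hXlaw : ∀ i, P.map (X i) = gaussianReal μ ⟨σ ^ 2, sq_nonneg σ⟩) (hσ : 0 < σ) {ε : ℝ}
    (hε0 : 0 < ε) (hε1 : ε < 1) :
    ∃ l, 0 < l ∧ l < 1 ∧ ∀ q, 4 ≤ q →
      P.real {ω | sampleStdDev (X · ω) q ≤ ε * σ} ≤ 3 * l ^ q ∧
        P.real {ω | 2 * σ < sampleStdDev (X · ω) q} ≤ 3 * l ^ q := by
  obtain ⟨l₁, hl₁0, hl₁1, hsmall⟩ := exists_measureReal_sampleStdDev_le_le hX hXm hXlaw hσ hε0 hε1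
  obtain ⟨l₂, hl₂0, hl₂1, hlarge⟩ := exists_measureReal_lt_sampleStdDev_le hX hXm hXlaw hσ
  refine ⟨max l₁ l₂, lt_max_of_lt_left hl₁0, max_lt hl₁1 hl₂1, fun q hq ↦ ⟨?_, ?_⟩⟩
  · refine (hsmall q (by omega)).trans ?_
    gcongr
    exact le_max_left _ _
  · refine (hlarge q hq).trans ?_
    calc l₂ ^ q ≤ max l₁ l₂ ^ q := by gcongr; exact le_max_right _ _
      _ ≤ 3 * max l₁ l₂ ^ q := le_mul_of_one_le_left (by positivity) (by norm_num)

end SampleStdDevTails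

/-- If the rule never fires then `T = sInf ∅ = 0`; the second alternative records that it
failed at `n = ⌈2 ρ σ L⌉₊`. -/
lemma stoppingRule_dichotomy {s : ℕ → ℝ} {m k T : ℕ} (hk : 1 ≤ k) {ρ σ L ε : ℝ} (hρ : 0 < ρ)
    (hL : 0 < L)
    (hT : T = sInf {n : ℕ | (m : ℝ) + (k : ℝ) * n ≥ ρ * s (m + k * n) * L})
    (hN : ρ⁻¹ * ((m : ℝ) + (k : ℝ) * (T : ℝ)) ≤ ε * (σ * L)) :
    (∃ q ∈ Icc m ⌊ρ * (ε * (σ * L))⌋₊, s q ≤ ε * σ) ∨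
      2 * σ < s (m + k * ⌈2 * ρ * (σ * L)⌉₊) := by
  by_cases hne : {n : ℕ | (m : ℝ) + (k : ℝ) * n ≥ ρ * s (m + k * n) * L}.Nonempty
  · left
    have hstop : ρ * s (m + k * T) * L ≤ (m : ℝ) + k * T := hT ▸ Nat.sInf_mem hne
    have hq : ((m + k * T : ℕ) : ℝ) ≤ ρ * (ε * (σ * L)) := by
      push_cast
      rwa [inv_mul_le_iff₀ hρ] at hN
    refine ⟨m + k * T, mem_Icc.mpr ⟨Nat.le_add_right _ _, Nat.le_floor hq⟩, ?_⟩
    push_cast at hq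
    have : ρ * L * s (m + k * T) ≤ ρ * L * (ε * σ) := by linarith
    exact le_of_mul_le_mul_left this (mul_pos hρ hL)
  · right
    set n := ⌈2 * ρ * (σ * L)⌉₊
    have hfail : (m : ℝ) + k * n < ρ * s (m + k * n) * L :=
      not_le.mp fun h ↦ hne ⟨n, h⟩
    have hn : 2 * ρ * (σ * L) ≤ (m : ℝ) + k * n := by
      have hk' : (1 : ℝ) ≤ k := by exact_mod_cast hk
      nlinarith [Nat.le_ceil (2 * ρ * (σ * L)), (m.cast_nonneg : (0 : ℝ) ≤ m),
        (n.cast_nonneg : (0 : ℝ) ≤ n)]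
    have : ρ * L * (2 * σ) < ρ * L * s (m + k * n) := by linarith
    exact lt_of_mul_lt_mul_left this (mul_pos hρ hL).le

lemma measureReal_biUnion_Icc_union_le {Ω : Type*} [MeasurableSpace Ω] {P : Measure Ω}
    [IsFiniteMeasure P] {E : ℕ → Set Ω} {F : Set Ω} {m M : ℕ} {l C : ℝ} (hl0 : 0 ≤ l)
    (hl1 : l < 1) (hC : 0 ≤ C) (hE : ∀ q ∈ Icc m M, P.real (E q) ≤ C * l ^ q)
    (hF : P.real F ≤ C * l ^ m) :
    P.real ((⋃ q ∈ Icc m M, E q) ∪ F) ≤ C * ((1 - l)⁻¹ + 1) * l ^ m := by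
  have hgeom : ∑ q ∈ Icc m M, l ^ q ≤ l ^ m / (1 - l) := by
    rw [← Ico_add_one_right_eq_Icc]
    exact geom_sum_Ico_le_of_lt_one hl0 hl1
  calc _ ≤ P.real (⋃ q ∈ Icc m M, E q) + P.real F := measureReal_union_le _ _
    _ ≤ ∑ q ∈ Icc m M, C * l ^ q + C * l ^ m :=
        add_le_add ((measureReal_biUnion_finset_le _ _).trans (sum_le_sum hE)) hF
    _ ≤ C * (l ^ m / (1 - l)) + C * l ^ m := by
        rw [← mul_sum]; gcongr
    _ = _ := by ring

lemma measureReal_sampleSize_le_le {Ω : Type*} [MeasurableSpace Ω] {P : Measure Ω}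
    [IsFiniteMeasure P] {S : ℕ → Ω → ℝ} {T : Ω → ℕ} {m k : ℕ} (hk : 1 ≤ k) {ρ σ L ε l C : ℝ}
    (hρ : 0 < ρ) (hL : 0 < L) (hl0 : 0 ≤ l) (hl1 : l < 1) (hC : 0 ≤ C)
    (hT : ∀ ω, T ω = sInf {n : ℕ | (m : ℝ) + (k : ℝ) * n ≥ ρ * S (m + k * n) ω * L})
    (hsmall : ∀ q, m ≤ q → P.real {ω | S q ω ≤ ε * σ} ≤ C * l ^ q)
    (hlarge : ∀ q, m ≤ q → P.real {ω | 2 * σ < S q ω} ≤ C * l ^ q) :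
    P.real {ω | ρ⁻¹ * ((m : ℝ) + k * T ω) ≤ ε * (σ * L)} ≤ C * ((1 - l)⁻¹ + 1) * l ^ m := by
  refine (measureReal_mono fun ω hω ↦ ?_).trans (measureReal_biUnion_Icc_union_le hl0 hl1 hC
    (M := ⌊ρ * (ε * (σ * L))⌋₊) (E := fun q ↦ {ω | S q ω ≤ ε * σ})
    (F := {ω | 2 * σ < S (m + k * ⌈2 * ρ * (σ * L)⌉₊) ω})
    (fun q hq ↦ hsmall q (mem_Icc.mp hq).1) ?_)
  · simpa [Set.mem_union, Set.mem_iUnion] using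
      stoppingRule_dichotomy (s := (S · ω)) hk hρ hL (hT ω) hω
  · exact (hlarge _ (Nat.le_add_right _ _)).trans <| mul_le_mul_of_nonneg_left
      (pow_le_pow_of_le_one hl0 hl1.le (Nat.le_add_right _ _)) hC

lemma isBigO_pow_rpow_neg {l : ℝ} (hl0 : 0 < l) (hl1 : l < 1) (s : ℝ) :
    (fun n : ℕ ↦ l ^ n) =O[atTop] fun n ↦ (n : ℝ) ^ (-s) := by
  have h := (isLittleO_exp_neg_mul_rpow_atTop (neg_pos.mpr (log_neg hl0 hl1)) (-s)).isBigO
  refine (h.comp_tendsto tendsto_natCast_atTop_atTop).congr_left fun n ↦ ?_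
  simp only [Function.comp_apply, neg_neg, mul_comm, exp_nat_mul, exp_log hl0]

lemma isBigO_rpow_neg_of_isBigO_rpow {ι : Type*} {l : Filter ι} {f g : ι → ℝ}
    (hf : ∀ i, 0 < f i) (hg : ∀ i, 0 < g i) {r s : ℝ} (hr : 0 < r) (hs : 0 ≤ s)
    (h : f =O[l] fun i ↦ g i ^ r) :
    (fun i ↦ g i ^ (-s)) =O[l] fun i ↦ f i ^ (-(s / r)) := by
  have h' := h.rpow (div_nonneg hs hr.le) (Eventually.of_forall fun i ↦ rpow_nonneg (hg i).le r)
  simp only [← rpow_mul (hg _).le, mul_div_cancel₀ s hr.ne'] at h'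
  simp only [rpow_neg (hg _).le, rpow_neg (hf _).le]
  exact h'.inv_rev (Eventually.of_forall fun i h0 ↦ absurd h0 (rpow_pos_of_pos (hf i) _).ne')

theorem stmt_12_general
    {Ω : Type*} [MeasurableSpace Ω] (P : Measure Ω) [IsProbabilityMeasure P]
    (X : ℕ → Ω → ℝ) (μ σ A : ℝ) (hσ : 0 < σ) (hA : 0 < A)
    (hXmeas : ∀ i, Measurable (X i))
    (hXindep : iIndepFun X P)
    (hXlaw : ∀ i, Measure.map (X i) P = gaussianReal μ ⟨σ ^ 2, sq_nonneg σ⟩)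
    (Xbar : ℕ → Ω → ℝ)
    (hXbar : ∀ n ω, Xbar n ω = (n : ℝ)⁻¹ * ∑ i ∈ Finset.range n, X i ω)
    (S : ℕ → Ω → ℝ)
    (hS : ∀ n ω, S n ω =
      Real.sqrt (((n : ℝ) - 1)⁻¹ * ∑ i ∈ Finset.range n, (X i ω - Xbar n ω) ^ 2))
    (k : ℕ) (hk : 1 ≤ k) (ρ r : ℝ) (hρ0 : 0 < ρ) (hr : 1 < r)
    (m₀ : ℕ → ℕ)
    (m : ℕ → ℕ) (hm : ∀ j, m j = m₀ j * k + 1)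
    (c : ℕ → ℝ) (hc : ∀ j, 0 < c j)
    (nstar : ℕ → ℝ) (hnstar : ∀ j, nstar j = σ * Real.sqrt (A / c j))
    (hm₀Top : Tendsto m₀ atTop atTop)
    (hnO : (fun j => nstar j) =O[atTop] fun j => (m j : ℝ) ^ r)
    (T : ℕ → Ω → ℕ)
    (hT : ∀ j ω, T j ω = sInf {n : ℕ |
      (m j : ℝ) + (k : ℝ) * n ≥ ρ * S (m j + k * n) ω * Real.sqrt (A / c j)})
    (N : ℕ → Ω → ℤ)
    (hN : ∀ j ω, N j ω = (⌈ρ⁻¹ * ((m j : ℝ) + (k : ℝ) * (T j ω : ℝ))⌉ - 1) + 1)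
    (ε γ : ℝ) (hε0 : 0 < ε) (hε1 : ε < 1) (hγ : 2 ≤ γ) :
    (fun j => (P {ω | (N j ω : ℝ) ≤ ε * nstar j}).toReal) =O[atTop]
      fun j => (nstar j) ^ (-(γ / (2 * r))) := by
  obtain ⟨l, hl0, hl1, htail⟩ :=
    exists_measureReal_sampleStdDev_tails_le hXindep hXmeas hXlaw hσ hε0 hε1
  have hSX : ∀ n ω, S n ω = sampleStdDev (X · ω) n := fun n ω ↦ by
    simp only [hS, hXbar, sampleStdDev]
  simp only [← hSX] at htail
  have hmTop : Tendsto m atTop atTop :=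
    tendsto_atTop_mono (fun j ↦ by rw [hm j]; nlinarith) hm₀Top
  have hpos : ∀ j, 0 < nstar j := fun j ↦ by
    rw [hnstar]; exact mul_pos hσ (sqrt_pos.mpr (div_pos hA (hc j)))
  have hbound : ∀ᶠ j in atTop,
      P.real {ω | (N j ω : ℝ) ≤ ε * nstar j} ≤ 3 * ((1 - l)⁻¹ + 1) * l ^ m j := by
    filter_upwards [hmTop.eventually_ge_atTop 4] with j hj
    refine (measureReal_mono fun ω hω ↦ ?_).trans (measureReal_sampleSize_le_le hk hρ0
      (sqrt_pos.mpr (div_pos hA (hc j))) hl0.le hl1 (by norm_num) (hT j)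
      (fun q hq ↦ (htail q (by omega)).1) (fun q hq ↦ (htail q (by omega)).2))
    rw [Set.mem_ofPred_eq, ← hnstar, ← Int.cast_natCast, ← Int.cast_natCast (T j ω)]
    exact (Int.le_ceil _).trans (by simpa [hN j ω] using hω)
  have hexp : (fun j ↦ (P {ω | (N j ω : ℝ) ≤ ε * nstar j}).toReal) =O[atTop] fun j ↦ l ^ m j :=
    IsBigO.of_bound _ <| hbound.mono fun j hj ↦ by
      rwa [norm_of_nonneg ENNReal.toReal_nonneg, norm_of_nonneg (by positivity)]
  rw [← div_div]
  exact hexp.trans <| ((isBigO_pow_rpow_neg hl0 hl1 (γ / 2)).comp_tendsto hmTop).trans <|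
    isBigO_rpow_neg_of_isBigO_rpow hpos (fun j ↦ by rw [hm j]; positivity) (by linarith)
      (by linarith) hnO

/-- Left-tail bound for the final sample size of P(ρ,k): for fixed 0 < ε < 1 and γ ≥ 2
with `E|S_m − σ|^γ = O(m^{−γ/2})`, one has `P(N ≤ ε n*) = O(n*^{−γ/(2r)})`. -/
theorem stmt_12
    {Ω : Type*} [MeasurableSpace Ω] (P : Measure Ω) [IsProbabilityMeasure P]
    (X : ℕ → Ω → ℝ) (μ σ A : ℝ) (hσ : 0 < σ) (hA : 0 < A)
    (hXmeas : ∀ i, Measurable (X i))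
    (hXindep : iIndepFun X P)
    (hXlaw : ∀ i, Measure.map (X i) P = gaussianReal μ ⟨σ ^ 2, sq_nonneg σ⟩)
    (Xbar : ℕ → Ω → ℝ)
    (hXbar : ∀ n ω, Xbar n ω = (n : ℝ)⁻¹ * ∑ i ∈ Finset.range n, X i ω)
    (S : ℕ → Ω → ℝ)
    (hS : ∀ n ω, S n ω =
      Real.sqrt (((n : ℝ) - 1)⁻¹ * ∑ i ∈ Finset.range n, (X i ω - Xbar n ω) ^ 2))
    (k : ℕ) (hk : 1 ≤ k) (ρ r : ℝ) (hρ0 : 0 < ρ) (hρ1 : ρ ≤ 1) (hr : 1 < r)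
    (m₀ : ℕ → ℕ) (hm₀ : ∀ j, 1 ≤ m₀ j)
    (m : ℕ → ℕ) (hm : ∀ j, m j = m₀ j * k + 1)
    (c : ℕ → ℝ) (hc : ∀ j, 0 < c j)
    (nstar : ℕ → ℝ) (hnstar : ∀ j, nstar j = σ * Real.sqrt (A / c j))
    (hm₀Top : Tendsto m₀ atTop atTop)
    (hcO : (fun j => c j) =O[atTop] fun j => (m j : ℝ) ^ (-(2 * r)))
    (hnO : (fun j => nstar j) =O[atTop] fun j => (m j : ℝ) ^ r)
    (hls : limsup (fun j => (m j : ℝ) / nstar j) atTop < ρ)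
    (T : ℕ → Ω → ℕ)
    (hT : ∀ j ω, T j ω = sInf {n : ℕ |
      (m j : ℝ) + (k : ℝ) * n ≥ ρ * S (m j + k * n) ω * Real.sqrt (A / c j)})
    (N : ℕ → Ω → ℤ)
    (hN : ∀ j ω, N j ω = (⌈ρ⁻¹ * ((m j : ℝ) + (k : ℝ) * (T j ω : ℝ))⌉ - 1) + 1)
    (ε γ : ℝ) (hε0 : 0 < ε) (hε1 : ε < 1) (hγ : 2 ≤ γ)
    (hmomγ : (fun j => ∫ ω, |S (m j) ω - σ| ^ γ ∂P) =O[atTop]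
      fun j => (m j : ℝ) ^ (-(γ / 2))) :
    (fun j => (P {ω | (N j ω : ℝ) ≤ ε * nstar j}).toReal) =O[atTop]
      fun j => (nstar j) ^ (-(γ / (2 * r))) :=
  stmt_12_general P X μ σ A hσ hA hXmeas hXindep hXlaw Xbar hXbar S hS k hk ρ r hρ0 hr m₀ m hm c hc
    nstar hnstar hm₀Top hnO T hT N hN ε γ hε0 hε1 hγ
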